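/- arXiv:1402.5495 — 7 statements merged into one kernel-verified Lean document; each statement's English description precedes it below -/
import Mathlib

section
/- Let V be a nontrivial variety of bounded lattices and let F be a free algebra for V over a countably infinite set of generators. Then the top element 1 is join-irreducible in F: if p ∨ q = 1 in F, then p = 1 or q = 1. -/
/-- A bundled bounded lattice. -/
structure BLat where
  carrier : Type
  [lat : Lattice carrier]
  [bdd : BoundedOrder carrier]

attribute [instance] BLat.lat BLat.bdd

/-- Direct product of a family of bounded lattices. -/
def BLat.pi {I : Type} (A : I → BLat) : BLat := ⟨∀ i, (A i).carrier⟩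

/-- A class of bounded lattices is a variety if it is closed under homomorphic images,
subalgebras (realized by injective bounded lattice homomorphisms) and direct products. -/
def IsBLatVariety (V : Set BLat) : Prop :=
  (∀ A ∈ V, ∀ B : BLat, ∀ f : BoundedLatticeHom A.carrier B.carrier,
      Function.Surjective f → B ∈ V) ∧
  (∀ A : BLat, ∀ B ∈ V, ∀ f : BoundedLatticeHom A.carrier B.carrier,
      Function.Injective f → A ∈ V) ∧
  (∀ (I : Type) (A : I → BLat), (∀ i, A i ∈ V) → BLat.pi A ∈ V)

/-- `F` is free for `V` over the countably infinite set of generators `x 0, x 1, …`: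
`F ∈ V` and every map of the generators into a member of `V` extends uniquely to a
bounded lattice homomorphism. -/
def IsFreeOverNat (V : Set BLat) (F : BLat) (x : ℕ → F.carrier) : Prop :=
  F ∈ V ∧ ∀ A ∈ V, ∀ g : ℕ → A.carrier,
    ∃! h : BoundedLatticeHom F.carrier A.carrier, ∀ n, h (x n) = g n

/-- The bounded lattice hom from `Bool` into any bounded lattice. -/
def boolHom (L : Type) [Lattice L] [BoundedOrder L] : BoundedLatticeHom Bool L where
  toFun b := if b then ⊤ else ⊥
  map_sup' a b := by cases a <;> cases b <;> simp
  map_inf' a b := by cases a <;> cases b <;> simp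
  map_top' := by simp [Top.top]
  map_bot' := by simp [Bot.bot]

/-- in the free algebra `F` of denumerable rank for a nontrivial variety of
bounded lattices, the top element is join-irreducible. -/
theorem stmt1 (V : Set BLat) (hV : IsBLatVariety V)
    (hnt : ∃ A ∈ V, Nontrivial A.carrier)
    (F : BLat) (x : ℕ → F.carrier) (hF : IsFreeOverNat V F x) :
    ∀ p q : F.carrier, p ⊔ q = ⊤ → p = ⊤ ∨ q = ⊤ := by
  classical
  obtain ⟨A, hA, hntA⟩ := hnt
  obtain ⟨hFV, hfree⟩ := hF
  -- The two-element bounded lattice `Bool` belongs to `V`.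
  have hB : (⟨Bool⟩ : BLat) ∈ V := by
    refine hV.2.1 ⟨Bool⟩ A hA (boolHom A.carrier) ?_
    intro a b hab
    have := hntA
    cases a <;> cases b <;> revert hab <;>
      simp [boolHom, bot_ne_top, top_ne_bot, (bot_ne_top (α := A.carrier)).symm]
  -- the hom `h : F → Bool` sending every generator to `false`
  obtain ⟨h, hh, -⟩ := hfree ⟨Bool⟩ hB (fun _ => false)
  -- `k : Bool → F`
  set k : BoundedLatticeHom Bool F.carrier := boolHom F.carrier with hk
  -- The product `F × F` (as a pi over `Bool`) is in `V`.
  have hP : BLat.pi (fun _ : Bool => F) ∈ V := hV.2.2 Bool _ (fun _ => hFV)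
  -- The order sublattice `D = {(a,b) | a ≤ b}` of `F × F`.
  letI DC : Type := {p : Bool → F.carrier // p false ≤ p true}
  letI instDL : Lattice DC :=
    Subtype.lattice (fun a b ha hb => sup_le_sup ha hb)
      (fun a b ha hb => inf_le_inf ha hb)
  letI instDB : BoundedOrder DC :=
    { top := ⟨⊤, le_rfl⟩
      le_top := fun a => by exact le_top (α := Bool → F.carrier)
      bot := ⟨⊥, le_rfl⟩
      bot_le := fun a => by exact bot_le (α := Bool → F.carrier) }
  letI D : BLat := ⟨DC⟩
  -- inclusion of `D` into the product
  letI ι : BoundedLatticeHom D.carrier (BLat.pi (fun _ : Bool => F)).carrier :=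
    { toFun := Subtype.val
      map_sup' := fun a b => rfl
      map_inf' := fun a b => rfl
      map_top' := rfl
      map_bot' := rfl }
  have hD : D ∈ V := hV.2.1 D (BLat.pi (fun _ : Bool => F)) hP ι Subtype.val_injective
  -- projections `D → F`
  letI π : Bool → BoundedLatticeHom D.carrier F.carrier := fun b =>
    { toFun := fun d => d.val b
      map_sup' := fun a c => rfl
      map_inf' := fun a c => rfl
      map_top' := rfl
      map_bot' := rfl }
  -- hom `H : F → D` sending `x n` to `(⊥, x n)`
  obtain ⟨H, hH, -⟩ := hfree D hD (fun n =>
    ⟨fun b => if b then x n else ⊥, by simp⟩)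
  -- second coordinate of `H` is the identity
  obtain ⟨u, -, hu⟩ := hfree F hFV x
  have h2 : ∀ w, ((π true).comp H) w = w := by
    have e1 : ((π true).comp H) = BoundedLatticeHom.id F.carrier := by
      rw [hu ((π true).comp H) (fun n => by simp [π, hH n]),
        hu (BoundedLatticeHom.id F.carrier) (fun n => rfl)]
    intro w; rw [e1]; rfl
  -- first coordinate of `H` equals `k ∘ h`
  obtain ⟨v, -, hv⟩ := hfree F hFV (fun _ => (⊥ : F.carrier))
  have h1 : ((π false).comp H) = k.comp h := by
    rw [hv ((π false).comp H) (fun n => by simp [π, hH n]),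
      hv (k.comp h) (fun n => by simp [hh n, k, boolHom])]
  -- hence `k (h w) ≤ w` for every `w`
  have key : ∀ w, k (h w) ≤ w := by
    intro w
    have : ((π false).comp H) w ≤ ((π true).comp H) w := (H w).2
    rw [h1, h2] at this
    exact this
  -- finish
  intro p q hpq
  have htop : h p ⊔ h q = ⊤ := by
    rw [← map_sup, hpq, map_top]
  have hkt : (k true : F.carrier) = ⊤ := rfl
  have : h p = true ∨ h q = true := by
    rcases Bool.eq_false_or_eq_true (h p) with hp | hp
    · exact Or.inl hp
    · rcases Bool.eq_false_or_eq_true (h q) with hq | hq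
      · exact Or.inr hq
      · exfalso; rw [hp, hq] at htop; exact absurd htop (by decide)
  rcases this with hp | hq
  · left
    have := key p
    rw [hp, hkt] at this
    exact le_antisymm le_top this
  · right
    have := key q
    rw [hq, hkt] at this
    exact le_antisymm le_top this
end

section
/- Let M be a closure algebra (an interior/closure Boolean algebra satisfying x ≤ ◇x = ◇◇x) that satisfies the McKinsey identity ◻◇x ≤ ◇◻x for all x, and let a ∈ M be an open element (◻a = a) with a ≠ 0. Then there exists a closure-algebra homomorphism h : M → 2 with h(a) = 1, where 2 is the two-element closure algebra with identity ◇. -/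
/-- A modal algebra: a Boolean algebra with a unary operation `◇` satisfying
`◇⊥ = ⊥` and `◇(a ⊔ b) = ◇a ⊔ ◇b`. -/
class ModalAlg (M : Type) extends BooleanAlgebra M where
  dia : M → M
  dia_bot : dia ⊥ = ⊥
  dia_sup : ∀ a b : M, dia (a ⊔ b) = dia a ⊔ dia b

/-- A closure algebra: a modal algebra satisfying `a ≤ ◇a = ◇◇a`. -/
class ClosAlg (M : Type) extends ModalAlg M where
  le_dia : ∀ a : M, a ≤ dia a
  dia_dia : ∀ a : M, dia (dia a) = dia a

/-- The possibility operator `◇`. -/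
def dia {M : Type} [ModalAlg M] : M → M := ModalAlg.dia

/-- The necessity operator `◻x = ¬◇¬x`. -/
def box {M : Type} [ModalAlg M] (a : M) : M := (dia aᶜ)ᶜ

/-- A homomorphism of closure algebras: it preserves the Boolean structure
(`⊔`, `ᶜ`, `⊥`, and hence `⊓`, `⊤`) and `◇`. -/
structure ClosHom (M N : Type) [ClosAlg M] [ClosAlg N] where
  toFun : M → N
  map_sup : ∀ a b : M, toFun (a ⊔ b) = toFun a ⊔ toFun b
  map_compl : ∀ a : M, toFun aᶜ = (toFun a)ᶜ
  map_bot : toFun ⊥ = ⊥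
  map_dia : ∀ a : M, toFun (dia a) = dia (toFun a)

/-- The two-element closure algebra `2`, with identity `◇`. -/
instance : ModalAlg Bool :=
  { (inferInstance : BooleanAlgebra Bool) with
    dia := id
    dia_bot := rfl
    dia_sup := fun _ _ => rfl }

instance : ClosAlg Bool :=
  { (inferInstance : ModalAlg Bool) with
    le_dia := fun _ => le_rfl
    dia_dia := fun _ => rfl }

section Aux

variable {M : Type} [ClosAlg M]

lemma dia_mono {x y : M} (h : x ≤ y) : dia x ≤ dia y := by
  have : dia (x ⊔ y) = dia x ⊔ dia y := ModalAlg.dia_sup x y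
  rw [sup_eq_right.mpr h] at this
  exact le_sup_left.trans this.ge

lemma box_mono {x y : M} (h : x ≤ y) : box x ≤ box y :=
  compl_le_compl (dia_mono (compl_le_compl h))

lemma box_le (x : M) : box x ≤ x := by
  have := ClosAlg.le_dia (xᶜ)
  calc box x = (dia xᶜ)ᶜ := rfl
    _ ≤ xᶜᶜ := compl_le_compl this
    _ = x := compl_compl x

lemma compl_box (x : M) : (box x)ᶜ = dia xᶜ := by
  simp [box]

lemma dia_sup' (x y : M) : dia (x ⊔ y) = dia x ⊔ dia y := ModalAlg.dia_sup x y

lemma dia_dia' (x : M) : dia (dia x) = dia x := ClosAlg.dia_dia x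

lemma box_compl_dia (x : M) : box (dia x)ᶜ = (dia x)ᶜ := by
  show (dia (dia x)ᶜᶜ)ᶜ = (dia x)ᶜ
  rw [compl_compl, dia_dia']

lemma box_inf (x y : M) : box (x ⊓ y) = box x ⊓ box y := by
  show (dia (x ⊓ y)ᶜ)ᶜ = (dia xᶜ)ᶜ ⊓ (dia yᶜ)ᶜ
  rw [compl_inf, dia_sup', compl_sup]

lemma box_top : (box (⊤ : M)) = ⊤ := by
  show (dia (⊤:M)ᶜ)ᶜ = ⊤
  rw [compl_top]
  show (ModalAlg.dia (⊥:M))ᶜ = ⊤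
  rw [ModalAlg.dia_bot, compl_bot]

/-- Open filters containing `a`: upward closed, meet closed, box closed, proper. -/
def GoodSet (a : M) : Set (Set M) :=
  {F | a ∈ F ∧ (⊥ : M) ∉ F ∧ (∀ x ∈ F, ∀ y, x ≤ y → y ∈ F) ∧
    (∀ x ∈ F, ∀ y ∈ F, x ⊓ y ∈ F) ∧ (∀ x ∈ F, box x ∈ F)}

end Aux

/-- let `M` be a closure algebra satisfying the McKinsey identity
`◻◇x ≤ ◇◻x`, and let `a ∈ M` be open (`◻a = a`) with `a ≠ ⊥`. Then there is a
closure-algebra homomorphism `h : M → 2` with `h a = ⊤`. -/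
theorem stmt5 (M : Type) [ClosAlg M]
    (hMcK : ∀ x : M, box (dia x) ≤ dia (box x))
    (a : M) (haOpen : box a = a) (ha : a ≠ ⊥) :
    ∃ h : ClosHom M Bool, h.toFun a = ⊤ := by
  classical
  -- the principal filter of `a` is a good set
  have hprin : {x : M | a ≤ x} ∈ GoodSet a := by
    refine ⟨le_rfl, ?_, fun x hx y hxy => hx.trans hxy,
      fun x hx y hy => le_inf hx hy, fun x hx => ?_⟩
    · intro h; exact ha (le_bot_iff.mp h)
    · have := box_mono hx; rwa [haOpen] at this
  obtain ⟨F, hsub, hFmem, hFmax⟩ :=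
    zorn_subset_nonempty (GoodSet a)
      (fun c hc hchain hne => by
        refine ⟨⋃₀ c, ⟨?_, ?_, ?_, ?_, ?_⟩, fun s hs => Set.subset_sUnion_of_mem hs⟩
        · obtain ⟨s, hs⟩ := hne
          exact ⟨s, hs, (hc hs).1⟩
        · rintro ⟨s, hs, hbot⟩
          exact (hc hs).2.1 hbot
        · rintro x ⟨s, hs, hx⟩ y hxy
          exact ⟨s, hs, (hc hs).2.2.1 x hx y hxy⟩
        · rintro x ⟨s, hs, hx⟩ y ⟨t, ht, hy⟩
          rcases hchain.total hs ht with h | h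
          · exact ⟨t, ht, (hc ht).2.2.2.1 x (h hx) y hy⟩
          · exact ⟨s, hs, (hc hs).2.2.2.1 x hx y (h hy)⟩
        · rintro x ⟨s, hs, hx⟩
          exact ⟨s, hs, (hc hs).2.2.2.2 x hx⟩)
      {x : M | a ≤ x} hprin
  obtain ⟨haF, hbot, hup, hinf, hbox⟩ := hFmem
  have htop : (⊤ : M) ∈ F := hup a haF ⊤ le_top
  -- maximality: for open u not in F, uᶜ ∈ F
  have hopen : ∀ u : M, box u = u → u ∉ F → uᶜ ∈ F := by
    intro u hu huF
    set F' : Set M := {x | ∃ f ∈ F, f ⊓ u ≤ x} with hF'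
    by_cases hbot' : (⊥ : M) ∈ F'
    · obtain ⟨f, hf, hfu⟩ := hbot'
      have : f ≤ uᶜ := by
        rw [le_compl_iff_disjoint_right]
        exact disjoint_iff_inf_le.mpr hfu
      exact hup f hf uᶜ this
    · exfalso
      have hF'mem : F' ∈ GoodSet a := by
        refine ⟨⟨a, haF, inf_le_left⟩, hbot', ?_, ?_, ?_⟩
        · rintro x ⟨f, hf, hfu⟩ y hxy
          exact ⟨f, hf, hfu.trans hxy⟩
        · rintro x ⟨f, hf, hfu⟩ y ⟨g, hg, hgu⟩
          exact ⟨f ⊓ g, hinf f hf g hg,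
            le_inf ((inf_le_inf_right u inf_le_left).trans hfu)
              ((inf_le_inf_right u inf_le_right).trans hgu)⟩
        · rintro x ⟨f, hf, hfu⟩
          refine ⟨box f, hbox f hf, ?_⟩
          have : box f ⊓ u = box (f ⊓ u) := by rw [box_inf, hu]
          rw [this]
          exact box_mono hfu
      have hFF' : F ⊆ F' := fun x hx => ⟨x, hx, inf_le_left⟩
      have : F' = F := le_antisymm (hFmax hF'mem hFF') hFF'
      exact huF (this ▸ ⟨⊤, htop, by simp⟩)
  -- F is an ultrafilter
  have hultra : ∀ x : M, x ∈ F ∨ xᶜ ∈ F := by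
    intro x
    by_contra hc
    push_neg at hc
    obtain ⟨hx, hxc⟩ := hc
    -- box xᶜ ∉ F (else xᶜ ∈ F), it's open, so its complement dia x ∈ F
    have hdx : dia x ∈ F := by
      have hbxc : box xᶜ ∉ F := fun h => hxc (hup _ h _ (box_le xᶜ))
      have : box (box xᶜ) = box xᶜ := by
        show box (dia xᶜᶜ)ᶜ = (dia xᶜᶜ)ᶜ
        exact box_compl_dia _
      have := hopen (box xᶜ) this hbxc
      rwa [compl_box, compl_compl] at this
    have hdxc : dia xᶜ ∈ F := by
      have hbx : box x ∉ F := fun h => hx (hup _ h _ (box_le x))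
      have : box (box x) = box x := box_compl_dia xᶜ
      have := hopen (box x) this hbx
      rwa [compl_box] at this
    -- McKinsey contradiction
    have h1 : dia (box x) ∈ F := hup _ (hbox _ hdx) _ (hMcK x)
    have h2 : (dia (box x))ᶜ ∈ F := by
      have : box (dia xᶜ) = (dia (box x))ᶜ := by
        show (dia (dia xᶜ)ᶜ)ᶜ = (dia (dia xᶜ)ᶜ)ᶜ
        rfl
      have hb := hbox _ hdxc
      rwa [this] at hb
    have := hinf _ h1 _ h2
    rw [inf_compl_eq_bot] at this
    exact hbot this
  -- properness: not both x and xᶜ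
  have hnotboth : ∀ x : M, x ∈ F → xᶜ ∉ F := by
    intro x hx hxc
    have := hinf _ hx _ hxc
    rw [inf_compl_eq_bot] at this
    exact hbot this
  refine ⟨⟨fun x => decide (x ∈ F), ?_, ?_, ?_, ?_⟩, by simp [haF]⟩
  · intro x y
    by_cases hx : x ∈ F
    · simp [hx, hup x hx (x ⊔ y) le_sup_left]
    · by_cases hy : y ∈ F
      · simp [hy, hup y hy (x ⊔ y) le_sup_right]
      · have hxc := (hultra x).resolve_left hx
        have hyc := (hultra y).resolve_left hy
        have : (x ⊔ y)ᶜ ∈ F := by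
          rw [compl_sup]; exact hinf _ hxc _ hyc
        have hxy : x ⊔ y ∉ F := fun h => hnotboth _ h this
        simp [hx, hy, hxy]
  · intro x
    by_cases hx : x ∈ F
    · simp [hx, hnotboth x hx]
    · simp [hx, (hultra x).resolve_left hx]
  · simp [hbot]
  · intro x
    by_cases hx : x ∈ F
    · have : dia x ∈ F := hup x hx _ (ClosAlg.le_dia x)
      simp [hx, this]
      rfl
    · have hxc := (hultra x).resolve_left hx
      have hbxc : box xᶜ ∈ F := hbox _ hxc
      have : (dia x)ᶜ ∈ F := by
        rwa [show box xᶜ = (dia x)ᶜ from by rw [box, compl_compl]] at hbxc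
      have hdx : dia x ∉ F := fun h => hnotboth _ h this
      simp [hx, hdx]
      rfl
end

section
/- Every simple closure algebra satisfying the McKinsey identity is isomorphic to the two-element closure algebra 2. -/
/-- A congruence of a closure algebra: an equivalence relation compatible with
`⊔`, `ᶜ` and `◇` (and hence with all the operations). -/
def IsClosCong (M : Type) [ClosAlg M] (r : M → M → Prop) : Prop :=
  Equivalence r ∧
    (∀ a b c d : M, r a b → r c d → r (a ⊔ c) (b ⊔ d)) ∧
    (∀ a b : M, r a b → r aᶜ bᶜ) ∧
    (∀ a b : M, r a b → r (dia a) (dia b))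

/-- A closure algebra is simple if it is nontrivial and its only congruences are the
identity and the total relation. -/
def IsSimpleClos (M : Type) [ClosAlg M] : Prop :=
  Nontrivial M ∧ ∀ r : M → M → Prop, IsClosCong M r →
    (r = (· = ·)) ∨ (∀ a b : M, r a b)

/-- every simple closure algebra satisfying the McKinsey identity
`◻◇x ≤ ◇◻x` is isomorphic to the two-element closure algebra `2`. -/
theorem stmt6 (M : Type) [ClosAlg M] (hsimple : IsSimpleClos M)
    (hMcK : ∀ x : M, box (dia x) ≤ dia (box x)) :
    ∃ h : ClosHom M Bool, Function.Bijective h.toFun := by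
  classical
  obtain ⟨hnt, hcong⟩ := hsimple
  have ds : ∀ a b : M, dia (a ⊔ b) = dia a ⊔ dia b := ModalAlg.dia_sup
  have dd : ∀ a : M, dia (dia a) = dia a := ClosAlg.dia_dia
  have ld : ∀ a : M, a ≤ dia a := ClosAlg.le_dia
  have db : dia (⊥ : M) = ⊥ := ModalAlg.dia_bot
  have dmono : ∀ a b : M, a ≤ b → dia a ≤ dia b := by
    intro a b h
    have : dia b = dia a ⊔ dia b := by rw [← ds, sup_eq_right.mpr h]
    rw [this]; exact le_sup_left
  -- every open element is trivial
  have hopen : ∀ u : M, dia uᶜ = uᶜ → u = ⊥ ∨ u = ⊤ := by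
    intro u hu
    set r : M → M → Prop := fun a b => a ⊓ u = b ⊓ u with hr
    have hc : IsClosCong M r := by
      refine ⟨⟨fun a => rfl, fun h => h.symm, fun h1 h2 => h1.trans h2⟩, ?_, ?_, ?_⟩
      · intro a b c d h1 h2
        show (a ⊔ c) ⊓ u = (b ⊔ d) ⊓ u
        rw [inf_sup_right, inf_sup_right, h1, h2]
      · intro a b h
        show aᶜ ⊓ u = bᶜ ⊓ u
        have e : ∀ x : M, xᶜ ⊓ u = (x ⊓ u)ᶜ ⊓ u := by
          intro x
          rw [compl_inf, inf_sup_right]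
          simp
        rw [e a, e b, h]
      · intro a b h
        have h' : a ⊓ u = b ⊓ u := h
        show dia a ⊓ u = dia b ⊓ u
        have key : ∀ x y : M, x ⊓ u = y ⊓ u → dia x ⊓ u ≤ dia y ⊓ u := by
          intro x y hxy
          have hsplit : dia x = dia (x ⊓ u) ⊔ dia (x ⊓ uᶜ) := by
            rw [← ds, ← inf_sup_left, sup_compl_eq_top, inf_top_eq]
          have h2 : dia (x ⊓ uᶜ) ≤ uᶜ := by
            calc dia (x ⊓ uᶜ) ≤ dia uᶜ := dmono _ _ inf_le_right
              _ = uᶜ := hu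
          have h1 : dia x ⊓ u ≤ dia (x ⊓ u) := by
            calc dia x ⊓ u = (dia (x ⊓ u) ⊔ dia (x ⊓ uᶜ)) ⊓ u := by rw [← hsplit]
              _ ≤ (dia (x ⊓ u) ⊔ uᶜ) ⊓ u := inf_le_inf_right u (sup_le_sup_left h2 _)
              _ ≤ dia (x ⊓ u) := by rw [inf_sup_right]; simp
          calc dia x ⊓ u ≤ dia (x ⊓ u) ⊓ u := le_inf h1 inf_le_right
            _ = dia (y ⊓ u) ⊓ u := by rw [hxy]
            _ ≤ dia y ⊓ u := inf_le_inf_right u (dmono _ _ inf_le_left)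
        exact le_antisymm (key a b h') (key b a h'.symm)
    rcases hcong r hc with heq | htot
    · right
      have h2 : r u ⊤ := by show u ⊓ u = ⊤ ⊓ u; simp
      rw [heq] at h2
      exact h2
    · left
      have h2 : u ⊓ u = ⊥ ⊓ u := htot u ⊥
      simpa using h2
  -- the dichotomy
  have hdi : ∀ a : M, a = ⊥ ∨ a = ⊤ := by
    intro a
    have o1 : (dia a)ᶜ = ⊥ ∨ (dia a)ᶜ = ⊤ := hopen _ (by rw [compl_compl, dd])
    have o2 : (dia aᶜ)ᶜ = ⊥ ∨ (dia aᶜ)ᶜ = ⊤ := hopen _ (by rw [compl_compl, dd])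
    rcases o1 with h1 | h1
    · rcases o2 with h2 | h2
      · exfalso
        have hda : dia a = ⊤ := by
          have := congrArg compl h1; simpa using this
        have hMa := hMcK a
        have hb : box (dia a) = ⊤ := by
          unfold box; rw [hda, compl_top, db, compl_bot]
        have hbx : box a = ⊥ := h2
        rw [hb, hbx, db] at hMa
        obtain ⟨x, y, hxy⟩ := hnt
        apply hxy
        have hz : ∀ z : M, z = ⊥ := fun z => le_antisymm (le_trans le_top hMa) bot_le
        rw [hz x, hz y]
      · right
        have hd : dia aᶜ = ⊥ := by
          have := congrArg compl h2; simpa using this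
        have : aᶜ = ⊥ := le_bot_iff.mp (hd ▸ ld aᶜ)
        have := congrArg compl this
        simpa using this
    · left
      have hd : dia a = ⊥ := by
        have := congrArg compl h1; simpa using this
      exact le_bot_iff.mp (hd ▸ ld a)
  have hne : (⊥ : M) ≠ ⊤ := by
    obtain ⟨x, y, hxy⟩ := hnt
    intro h
    apply hxy
    rcases hdi x with hx | hx <;> rcases hdi y with hy | hy <;> rw [hx, hy] <;> simp [h]
  have dtop : dia (⊤ : M) = ⊤ := le_antisymm le_top (ld ⊤)
  refine ⟨⟨fun a => if a = ⊤ then true else false, ?_, ?_, ?_, ?_⟩, ?_, ?_⟩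
  · intro a b
    rcases hdi a with ha | ha <;> rcases hdi b with hb | hb <;>
      subst ha <;> subst hb <;> simp [hne]
  · intro a
    rcases hdi a with ha | ha <;> subst ha <;> simp [hne]
  · simp [hne]
  · intro a
    rcases hdi a with ha | ha <;> subst ha <;> simp [hne, db, dtop] <;> rfl
  · intro a b hab
    rcases hdi a with ha | ha <;> rcases hdi b with hb | hb <;> subst ha <;> subst hb <;>
      simp [hne] at hab ⊢
  · intro b
    cases b
    · exact ⟨⊥, by simp [hne]⟩
    · exact ⟨⊤, by simp⟩
end

section
/- Let Q be a quasivariety with free algebra F of denumerable rank, and let C be a subalgebra of F. Then the class K = {A ∈ Q : A × C ∈ Q(F)} is a quasivariety: it is closed under subalgebras, direct products, and ultraproducts, and contains F. Here Q(F) denotes the quasivariety generated by F. -/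
/-- An algebraic signature: a type of operation symbols with arities. -/
structure Signature where
  ops : Type
  arity : ops → ℕ

/-- An algebra for a signature. -/
structure SigAlg (σ : Signature) where
  carrier : Type
  interp : (o : σ.ops) → (Fin (σ.arity o) → carrier) → carrier

/-- Homomorphisms of algebras. -/
def IsHom {σ : Signature} (A B : SigAlg σ) (f : A.carrier → B.carrier) : Prop :=
  ∀ (o : σ.ops) (xs : Fin (σ.arity o) → A.carrier),
    f (A.interp o xs) = B.interp o (fun k => f (xs k))

/-- Terms in `n` variables. -/
inductive SigTerm (σ : Signature) (n : ℕ) where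
  | var : Fin n → SigTerm σ n
  | app : (o : σ.ops) → (Fin (σ.arity o) → SigTerm σ n) → SigTerm σ n

/-- Evaluation of a term in an algebra under an assignment of the variables. -/
def evalT {σ : Signature} (A : SigAlg σ) {n : ℕ} (env : Fin n → A.carrier) :
    SigTerm σ n → A.carrier
  | .var i => env i
  | .app o ts => A.interp o (fun k => evalT A env (ts k))

/-- A quasi-identity `(∀ x̄)[s₁ = t₁ ∧ ⋯ ∧ sₘ = tₘ → s = t]`: a finite list of premise
equations and a conclusion equation, in `nvars` variables.  When `prem = []` it is an
identity. -/
structure QuasiId (σ : Signature) where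
  nvars : ℕ
  prem : List (SigTerm σ nvars × SigTerm σ nvars)
  concl : SigTerm σ nvars × SigTerm σ nvars

/-- Satisfaction of a quasi-identity in an algebra. -/
def SatQ {σ : Signature} (A : SigAlg σ) (q : QuasiId σ) : Prop :=
  ∀ env : Fin q.nvars → A.carrier,
    (∀ p ∈ q.prem, evalT A env p.1 = evalT A env p.2) →
    evalT A env q.concl.1 = evalT A env q.concl.2

/-- The class of models of a set of quasi-identities. -/
def ModQ (σ : Signature) (E : Set (QuasiId σ)) : Set (SigAlg σ) :=
  {A | ∀ q ∈ E, SatQ A q}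

/-- A quasivariety: a class of algebras axiomatized by quasi-identities. -/
def IsQuasivariety (σ : Signature) (Q : Set (SigAlg σ)) : Prop :=
  ∃ E : Set (QuasiId σ), Q = ModQ σ E

/-- The quasivariety generated by `F`: the class of all models of the quasi-equational
theory of `F`. -/
def QGen (σ : Signature) (F : SigAlg σ) : Set (SigAlg σ) :=
  ModQ σ {q | SatQ F q}

/-- `F` is free for `Q` over the countably infinite set of free generators
`x 0, x 1, …`. -/
def IsFreeAlg (σ : Signature) (Q : Set (SigAlg σ)) (F : SigAlg σ) (x : ℕ → F.carrier) :
    Prop :=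
  F ∈ Q ∧ ∀ A ∈ Q, ∀ g : ℕ → A.carrier,
    ∃! h : F.carrier → A.carrier, IsHom F A h ∧ ∀ n, h (x n) = g n

/-- A quasi-identity `q` true in the free algebra `F` is `Q`-active if its premise is
satisfiable in `F` (otherwise it is `Q`-passive). -/
def IsActive {σ : Signature} (F : SigAlg σ) (q : QuasiId σ) : Prop :=
  SatQ F q ∧ ∃ env : Fin q.nvars → F.carrier,
    ∀ p ∈ q.prem, evalT F env p.1 = evalT F env p.2

/-- `Q` (with free algebra `F`) is almost structurally complete: every active
quasi-identity holds in all of `Q`. -/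
def ASC (σ : Signature) (Q : Set (SigAlg σ)) (F : SigAlg σ) : Prop :=
  ∀ q : QuasiId σ, IsActive F q → ∀ A ∈ Q, SatQ A q

/-- Binary direct product of algebras. -/
def prodAlg {σ : Signature} (A B : SigAlg σ) : SigAlg σ where
  carrier := A.carrier × B.carrier
  interp o xs := (A.interp o (fun k => (xs k).1), B.interp o (fun k => (xs k).2))

/-- Direct product of a family of algebras. -/
def piAlg {σ : Signature} {I : Type} (A : I → SigAlg σ) : SigAlg σ where
  carrier := ∀ i, (A i).carrier
  interp o xs := fun i => (A i).interp o (fun k => xs k i)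

/-- A subuniverse: a subset closed under all the operations. -/
def IsSubuniverse {σ : Signature} (A : SigAlg σ) (C : Set A.carrier) : Prop :=
  ∀ (o : σ.ops) (xs : Fin (σ.arity o) → A.carrier), (∀ k, xs k ∈ C) → A.interp o xs ∈ C

/-- The subalgebra on a subuniverse. -/
def subAlg {σ : Signature} (A : SigAlg σ) (C : Set A.carrier)
    (hC : IsSubuniverse A C) : SigAlg σ where
  carrier := C
  interp o xs := ⟨A.interp o (fun k => (xs k : A.carrier)), hC o _ (fun k => (xs k).2)⟩

/-- The setoid of `U`-almost-everywhere equality on a product. -/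
def upSetoid {σ : Signature} {I : Type} (U : Ultrafilter I) (A : I → SigAlg σ) :
    Setoid (∀ i, (A i).carrier) where
  r x y := {i | x i = y i} ∈ U
  iseqv := by
    refine ⟨fun x => ?_, fun {x y} h => ?_, fun {x y z} h1 h2 => ?_⟩
    · have e : {i | x i = x i} = (Set.univ : Set I) := by ext i; simp
      rw [e]; exact Filter.univ_mem
    · have e : {i | x i = y i} = {i | y i = x i} := by ext i; exact eq_comm
      rwa [e] at h
    · refine Filter.mem_of_superset (Filter.inter_mem h1 h2) ?_
      intro i hi
      exact hi.1.trans hi.2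

/-- The ultraproduct of a family of algebras modulo an ultrafilter. -/
noncomputable def ultraProd {σ : Signature} {I : Type} (U : Ultrafilter I)
    (A : I → SigAlg σ) : SigAlg σ where
  carrier := Quotient (upSetoid U A)
  interp o xs :=
    Quotient.mk (upSetoid U A) (fun i => (A i).interp o (fun k => (xs k).out i))


/-! Subalgebras, products and ultraproducts preserve every quasi-identity, so the models
of any set of quasi-identities are closed under them.  For `K = {A ∈ Q : A × C ∈ Q(F)}`
one moves the factor `C` inside: `(∏ Aᵢ) × C` embeds in `(∏ (Aᵢ × C)) × C` (the extra
factor covers the empty product), and `(∏_U Aᵢ) × C` embeds in `∏_U (Aᵢ × C)` by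
`([a], c) ↦ [(aᵢ, c)ᵢ]`, injective because `U`-large sets are nonempty.  Finally `F × C`
embeds in `F × F ∈ Q(F)`. -/

variable {σ : Signature}

section Terms

theorem IsHom.map_evalT {A B : SigAlg σ} {f : A.carrier → B.carrier} (hf : IsHom A B f)
    {n : ℕ} (env : Fin n → A.carrier) :
    ∀ t : SigTerm σ n, f (evalT A env t) = evalT B (f ∘ env) t
  | .var _ => rfl
  | .app o ts => by
    simp only [evalT, hf o]
    exact congrArg (B.interp o) (funext fun k => hf.map_evalT env (ts k))

end Terms

section UltraProd

theorem ultraProd_mk_eq_iff {I : Type} {U : Ultrafilter I} {A : I → SigAlg σ}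
    {a b : ∀ i, (A i).carrier} :
    (Quotient.mk (upSetoid U A) a : (ultraProd U A).carrier) = Quotient.mk (upSetoid U A) b ↔
      ∀ᶠ i in (U : Filter I), a i = b i :=
  Quotient.eq

theorem ultraProd_interp_mk {I : Type} (U : Ultrafilter I) (A : I → SigAlg σ) (o : σ.ops)
    (xs : Fin (σ.arity o) → ∀ i, (A i).carrier) :
    (ultraProd U A).interp o (fun k => Quotient.mk (upSetoid U A) (xs k)) =
      Quotient.mk (upSetoid U A) (fun i => (A i).interp o fun k => xs k i) :=
  ultraProd_mk_eq_iff.2 <| (Filter.eventually_all.2 fun k =>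
    show ∀ᶠ _ in (U : Filter I), _ from Quotient.mk_out (s := upSetoid U A) (xs k)).mono
      fun _ hi => congrArg _ (funext hi)

theorem evalT_ultraProd {I : Type} (U : Ultrafilter I) (A : I → SigAlg σ) {n : ℕ}
    (env : Fin n → ∀ i, (A i).carrier) :
    ∀ t : SigTerm σ n, evalT (ultraProd U A) (fun j => Quotient.mk (upSetoid U A) (env j)) t =
      Quotient.mk (upSetoid U A) (fun i => evalT (A i) (fun j => env j i) t)
  | .var _ => rfl
  | .app o ts => (congrArg ((ultraProd U A).interp o) (funext fun k =>
      evalT_ultraProd U A env (ts k))).trans (ultraProd_interp_mk U A o _)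

end UltraProd

section Satisfaction

variable {q : QuasiId σ}

theorem SatQ.of_separating_homs {ι : Type} {A : ι → SigAlg σ} {B : SigAlg σ}
    {f : ∀ i, B.carrier → (A i).carrier} (hA : ∀ i, SatQ (A i) q)
    (hf : ∀ i, IsHom B (A i) (f i))
    (hsep : ∀ a b, (∀ i, f i a = f i b) → a = b) : SatQ B q := by
  intro env hprem
  refine hsep _ _ fun i => ?_
  rw [(hf i).map_evalT, (hf i).map_evalT]
  exact hA i _ fun p hp => by rw [← (hf i).map_evalT, ← (hf i).map_evalT, hprem p hp]

theorem SatQ.of_injective_hom {A B : SigAlg σ} {f : A.carrier → B.carrier} (hB : SatQ B q)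
    (hf : IsHom A B f) (hinj : Function.Injective f) : SatQ A q :=
  SatQ.of_separating_homs (ι := Unit) (fun _ => hB) (fun _ => hf) fun _ _ h => hinj (h ())

theorem SatQ.prodAlg {A B : SigAlg σ} (hA : SatQ A q) (hB : SatQ B q) :
    SatQ (prodAlg A B) q :=
  SatQ.of_separating_homs (A := fun b => bif b then A else B)
    (f := fun | true => Prod.fst | false => Prod.snd)
    (fun | true => hA | false => hB) (fun | true => fun _ _ => rfl | false => fun _ _ => rfl)
    fun _ _ h => Prod.ext (h true) (h false)

theorem SatQ.piAlg {I : Type} {A : I → SigAlg σ} (h : ∀ i, SatQ (A i) q) :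
    SatQ (piAlg A) q :=
  SatQ.of_separating_homs (f := fun i a => a i) h (fun _ _ _ => rfl) fun _ _ => funext

theorem SatQ.ultraProd {I : Type} {U : Ultrafilter I} {A : I → SigAlg σ}
    (h : ∀ i, SatQ (A i) q) : SatQ (ultraProd U A) q := by
  intro env hprem
  obtain ⟨e, rfl⟩ : ∃ e : Fin q.nvars → ∀ i, (A i).carrier,
      env = fun j => Quotient.mk (upSetoid U A) (e j) :=
    ⟨fun j => (env j).out, funext fun j => (Quotient.out_eq _).symm⟩
  simp only [evalT_ultraProd] at hprem ⊢
  have hprem_ae := (Filter.eventually_all_finite q.prem.finite_toSet).2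
    fun p hp => ultraProd_mk_eq_iff.1 (hprem p hp)
  exact ultraProd_mk_eq_iff.2 (hprem_ae.mono fun i hi => h i _ hi)

end Satisfaction

section Embeddings

theorem isHom_id (A : SigAlg σ) : IsHom A A id := fun _ _ => rfl

theorem isHom_subtype_val (A : SigAlg σ) {C : Set A.carrier} (hC : IsSubuniverse A C) :
    IsHom (subAlg A C hC) A Subtype.val := fun _ _ => rfl

theorem IsHom.prodMap {A A' B B' : SigAlg σ} {f : A.carrier → A'.carrier}
    {g : B.carrier → B'.carrier} (hf : IsHom A A' f) (hg : IsHom B B' g) :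
    IsHom (prodAlg A B) (prodAlg A' B') (Prod.map f g) := by
  intro o xs
  exact Prod.ext (hf o _) (hg o _)

def piAlgProdDiag {I : Type} (A : I → SigAlg σ) (D : SigAlg σ)
    (p : (prodAlg (piAlg A) D).carrier) :
    (prodAlg (piAlg fun i => prodAlg (A i) D) D).carrier :=
  (fun i => (p.1 i, p.2), p.2)

theorem isHom_piAlgProdDiag {I : Type} (A : I → SigAlg σ) (D : SigAlg σ) :
    IsHom (prodAlg (piAlg A) D) (prodAlg (piAlg fun i => prodAlg (A i) D) D)
      (piAlgProdDiag A D) :=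
  fun _ _ => rfl

theorem injective_piAlgProdDiag {I : Type} (A : I → SigAlg σ) (D : SigAlg σ) :
    Function.Injective (piAlgProdDiag A D) :=
  fun _ _ h => Prod.ext (funext fun i => congrArg (fun r => (r.1 i).1) h) (congrArg (·.2) h)

def ultraProdProdDiag {I : Type} (U : Ultrafilter I) (A : I → SigAlg σ) (D : SigAlg σ)
    (p : (prodAlg (ultraProd U A) D).carrier) :
    (ultraProd U fun i => prodAlg (A i) D).carrier :=
  Quotient.map (fun a i => (a i, p.2))
    (fun _ _ h => Filter.Eventually.mono h fun _ hi => congrArg (·, p.2) hi) p.1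

theorem isHom_ultraProdProdDiag {I : Type} (U : Ultrafilter I) (A : I → SigAlg σ)
    (D : SigAlg σ) :
    IsHom (prodAlg (ultraProd U A) D) (ultraProd U fun i => prodAlg (A i) D)
      (ultraProdProdDiag U A D) := by
  intro o xs
  obtain ⟨a, c, rfl⟩ : ∃ (a : Fin (σ.arity o) → ∀ i, (A i).carrier) (c : _),
      xs = fun k => (Quotient.mk (upSetoid U A) (a k), c k) :=
    ⟨fun k => (xs k).1.out, fun k => (xs k).2,
      funext fun k => Prod.ext (Quotient.out_eq _).symm rfl⟩
  show Quotient.map _ _ ((ultraProd U A).interp o fun k => Quotient.mk _ (a k)) =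
    (ultraProd U fun i => prodAlg (A i) D).interp o fun k =>
      Quotient.mk _ fun i => ((a k i, c k) : (prodAlg (A i) D).carrier)
  rw [ultraProd_interp_mk]
  exact (ultraProd_interp_mk U (fun i => prodAlg (A i) D) o
    fun k i => ((a k i, c k) : (prodAlg (A i) D).carrier)).symm

theorem injective_ultraProdProdDiag {I : Type} (U : Ultrafilter I) (A : I → SigAlg σ)
    (D : SigAlg σ) : Function.Injective (ultraProdProdDiag U A D) := by
  rintro ⟨a, c⟩ ⟨b, d⟩ h
  induction a, b using Quotient.inductionOn₂ with
  | h a b =>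
    have hab : ∀ᶠ i in (U : Filter I), (a i, c) = (b i, d) := ultraProd_mk_eq_iff.1 h
    obtain ⟨i, hi⟩ := hab.exists
    exact Prod.ext (ultraProd_mk_eq_iff.2 (hab.mono fun _ hj => (Prod.mk.inj hj).1))
      (Prod.mk.inj hi).2

end Embeddings

section Closure

variable {E : Set (QuasiId σ)}

theorem mem_ModQ_of_injective_hom {A B : SigAlg σ} (hB : B ∈ ModQ σ E)
    {f : A.carrier → B.carrier} (hf : IsHom A B f) (hinj : Function.Injective f) :
    A ∈ ModQ σ E :=
  fun q hq => (hB q hq).of_injective_hom hf hinj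

theorem prodAlg_mem_ModQ {A B : SigAlg σ} (hA : A ∈ ModQ σ E) (hB : B ∈ ModQ σ E) :
    prodAlg A B ∈ ModQ σ E :=
  fun q hq => (hA q hq).prodAlg (hB q hq)

theorem piAlg_mem_ModQ {I : Type} {A : I → SigAlg σ} (h : ∀ i, A i ∈ ModQ σ E) :
    piAlg A ∈ ModQ σ E :=
  fun q hq => SatQ.piAlg fun i => h i q hq

theorem ultraProd_mem_ModQ {I : Type} {U : Ultrafilter I} {A : I → SigAlg σ}
    (h : ∀ i, A i ∈ ModQ σ E) : ultraProd U A ∈ ModQ σ E :=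
  fun q hq => SatQ.ultraProd fun i => h i q hq

theorem self_mem_QGen (F : SigAlg σ) : F ∈ QGen σ F := fun _ hq => hq

end Closure

section ProdWithFixedFactor

variable {E : Set (QuasiId σ)} {D : SigAlg σ}

theorem prodAlg_mem_ModQ_of_injective_hom {A B : SigAlg σ} (hB : prodAlg B D ∈ ModQ σ E)
    {f : A.carrier → B.carrier} (hf : IsHom A B f) (hinj : Function.Injective f) :
    prodAlg A D ∈ ModQ σ E :=
  mem_ModQ_of_injective_hom hB (hf.prodMap (isHom_id D)) (hinj.prodMap Function.injective_id)

theorem prodAlg_piAlg_mem_ModQ {I : Type} {A : I → SigAlg σ} (hD : D ∈ ModQ σ E)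
    (h : ∀ i, prodAlg (A i) D ∈ ModQ σ E) : prodAlg (piAlg A) D ∈ ModQ σ E :=
  mem_ModQ_of_injective_hom (prodAlg_mem_ModQ (piAlg_mem_ModQ h) hD)
    (isHom_piAlgProdDiag A D) (injective_piAlgProdDiag A D)

theorem prodAlg_ultraProd_mem_ModQ {I : Type} {U : Ultrafilter I} {A : I → SigAlg σ}
    (h : ∀ i, prodAlg (A i) D ∈ ModQ σ E) : prodAlg (ultraProd U A) D ∈ ModQ σ E :=
  mem_ModQ_of_injective_hom (ultraProd_mem_ModQ h)
    (isHom_ultraProdProdDiag U A D) (injective_ultraProdProdDiag U A D)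

end ProdWithFixedFactor

/-- let `Q` be a quasivariety with free algebra `F` of denumerable rank
and let `C` be a subalgebra of `F`.  Then `K = {A ∈ Q : A × C ∈ Q(F)}` is a
quasivariety: it is closed under subalgebras, direct products and ultraproducts, and it
contains `F`. -/
theorem stmt11 (σ : Signature) (Q : Set (SigAlg σ)) (hQ : IsQuasivariety σ Q)
    (F : SigAlg σ) (x : ℕ → F.carrier) (hF : IsFreeAlg σ Q F x)
    (C : Set F.carrier) (hC : IsSubuniverse F C) :
    let K : Set (SigAlg σ) := {A | A ∈ Q ∧ prodAlg A (subAlg F C hC) ∈ QGen σ F}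
    (∀ (A B : SigAlg σ), B ∈ K → ∀ f : A.carrier → B.carrier,
        IsHom A B f → Function.Injective f → A ∈ K) ∧
    (∀ (I : Type) (As : I → SigAlg σ), (∀ i, As i ∈ K) → piAlg As ∈ K) ∧
    (∀ (I : Type) (U : Ultrafilter I) (As : I → SigAlg σ),
        (∀ i, As i ∈ K) → ultraProd U As ∈ K) ∧
    F ∈ K := by
  obtain ⟨E, rfl⟩ := hQ
  have hCF : subAlg F C hC ∈ QGen σ F :=
    mem_ModQ_of_injective_hom (self_mem_QGen F) (isHom_subtype_val F hC) Subtype.val_injective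
  have hFCF : prodAlg F (subAlg F C hC) ∈ QGen σ F :=
    mem_ModQ_of_injective_hom (prodAlg_mem_ModQ (self_mem_QGen F) (self_mem_QGen F))
      ((isHom_id F).prodMap (isHom_subtype_val F hC))
      (Function.injective_id.prodMap Subtype.val_injective)
  refine ⟨fun A B hB f hf hinj => ⟨?_, ?_⟩, fun I As h => ⟨?_, ?_⟩,
    fun I U As h => ⟨?_, ?_⟩, hF.1, hFCF⟩
  · exact mem_ModQ_of_injective_hom hB.1 hf hinj
  · exact prodAlg_mem_ModQ_of_injective_hom hB.2 hf hinj
  · exact piAlg_mem_ModQ fun i => (h i).1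
  · exact prodAlg_piAlg_mem_ModQ hCF fun i => (h i).2
  · exact ultraProd_mem_ModQ fun i => (h i).1
  · exact prodAlg_ultraProd_mem_ModQ fun i => (h i).2
end

section
/- Let Q be a quasivariety with free algebra F of denumerable rank. If every nontrivial algebra of Q admits a homomorphism into F, then Q is almost structurally complete if and only if Q is structurally complete. -/
theorem hom_evalT {σ : Signature} {A B : SigAlg σ} {f : A.carrier → B.carrier}
    (hf : IsHom A B f) {n : ℕ} (env : Fin n → A.carrier) (t : SigTerm σ n) :
    f (evalT A env t) = evalT B (fun i => f (env i)) t := by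
  induction t with
  | var i => rfl
  | app o ts ih => simp only [evalT, hf o, ih]

/-- let `Q` be a quasivariety with free algebra `F` of denumerable rank.
If every nontrivial algebra of `Q` admits a homomorphism into `F`, then `Q` is almost
structurally complete iff it is structurally complete (i.e. every quasi-identity true in
`F` is true in all of `Q`, in other words `Q = Q(F)`). -/
theorem stmt13 (σ : Signature) (Q : Set (SigAlg σ)) (hQ : IsQuasivariety σ Q)
    (F : SigAlg σ) (x : ℕ → F.carrier) (hF : IsFreeAlg σ Q F x)
    (hhom : ∀ A ∈ Q, Nontrivial A.carrier → ∃ f : A.carrier → F.carrier, IsHom A F f) :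
    ASC σ Q F ↔ (∀ q : QuasiId σ, SatQ F q → ∀ A ∈ Q, SatQ A q) := by
  constructor
  · intro hasc q hq A hA env hprem
    by_cases hnt : Nontrivial A.carrier
    · obtain ⟨f, hf⟩ := hhom A hA hnt
      have hact : IsActive F q := by
        refine ⟨hq, fun i => f (env i), fun p hp => ?_⟩
        rw [← hom_evalT hf, ← hom_evalT hf, hprem p hp]
      exact hasc q hact A hA env hprem
    · have : Subsingleton A.carrier := not_nontrivial_iff_subsingleton.mp hnt
      exact Subsingleton.elim _ _
  · intro hsc q hact A hA
    exact hsc q hact.1 A hA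
end

section
/- Let V be a variety (of algebras in some language) that is almost structurally complete, with free algebra F of denumerable rank, and let P be a V-finitely presented unifiable algebra that does not embed into F. Then P has no most general unifier; in particular V does not have unitary unification. -/
/-- `P` is presented in `Q` by `k` generators and a finite list of relations: there are
generators `p : Fin k → P` satisfying the relations, such that for every `A ∈ Q` and
every tuple `a` in `A` satisfying the relations there is a unique homomorphism `P → A`
sending the generators to `a`.  (This is the universal property of `F(k)/θ_Q(H)` for the
finite set `H` of relations.) -/
def IsPresentedWith {σ : Signature} (Q : Set (SigAlg σ)) (P : SigAlg σ) (k : ℕ) : Prop :=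
  ∃ (rels : List (SigTerm σ k × SigTerm σ k)) (p : Fin k → P.carrier),
    (∀ r ∈ rels, evalT P p r.1 = evalT P p r.2) ∧
    ∀ A ∈ Q, ∀ a : Fin k → A.carrier,
      (∀ r ∈ rels, evalT A a r.1 = evalT A a r.2) →
      ∃! h : P.carrier → A.carrier, IsHom P A h ∧ ∀ j, h (p j) = a j

/-- `P` is `Q`-finitely presented. -/
def IsFinitelyPresented {σ : Signature} (Q : Set (SigAlg σ)) (P : SigAlg σ) : Prop :=
  ∃ k : ℕ, IsPresentedWith Q P k

/-- A variety: a class of algebras axiomatized by identities (quasi-identities with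
empty premise). -/
def IsVarietyAlg (σ : Signature) (V : Set (SigAlg σ)) : Prop :=
  ∃ E : Set (QuasiId σ), (∀ q ∈ E, q.prem = []) ∧ V = ModQ σ E

/-- A unifier of `P` (with respect to the free algebra `F`): a homomorphism `P → F`. -/
def IsUnifier {σ : Signature} (P F : SigAlg σ) (u : P.carrier → F.carrier) : Prop :=
  IsHom P F u

/-- `u` is a most general unifier of `P`: every unifier of `P` factors through `u` via
an endomorphism of `F`. -/
def IsMGU {σ : Signature} (P F : SigAlg σ) (u : P.carrier → F.carrier) : Prop :=
  IsUnifier P F u ∧ ∀ v : P.carrier → F.carrier, IsUnifier P F v →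
    ∃ s : F.carrier → F.carrier, IsHom F F s ∧ v = s ∘ u

/-- `V` has unitary unification: every unifiable `V`-finitely presented algebra has a
most general unifier. -/
def HasUnitaryUnification {σ : Signature} (V : Set (SigAlg σ)) (F : SigAlg σ) : Prop :=
  ∀ P : SigAlg σ, P ∈ V → IsFinitelyPresented V P →
    (∃ u : P.carrier → F.carrier, IsUnifier P F u) →
    ∃ u : P.carrier → F.carrier, IsMGU P F u

/-- Homomorphisms commute with term evaluation. -/
lemma evalT_hom {σ : Signature} {A B : SigAlg σ} {f : A.carrier → B.carrier}
    (hf : IsHom A B f) {n : ℕ} (env : Fin n → A.carrier) :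
    ∀ t : SigTerm σ n, f (evalT A env t) = evalT B (fun i => f (env i)) t := by
  intro t
  induction t with
  | var i => rfl
  | app o ts ih =>
    show f (A.interp o _) = B.interp o _
    rw [hf o]
    exact congrArg (B.interp o) (funext fun k => ih k)

lemma isHom_comp {σ : Signature} {A B C : SigAlg σ} {f : A.carrier → B.carrier}
    {g : B.carrier → C.carrier} (hf : IsHom A B f) (hg : IsHom B C g) :
    IsHom A C (g ∘ f) := by
  intro o xs
  show g (f (A.interp o xs)) = _
  rw [hf o, hg o]
  rfl

/-- The range of term evaluation at a fixed tuple is a subuniverse. -/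
lemma range_evalT_subuniverse {σ : Signature} (A : SigAlg σ) {k : ℕ}
    (p : Fin k → A.carrier) :
    IsSubuniverse A (Set.range (fun t : SigTerm σ k => evalT A p t)) := by
  intro o xs hxs
  choose ts hts using hxs
  exact ⟨SigTerm.app o ts, by
    show A.interp o _ = _
    exact congrArg (A.interp o) (funext fun j => hts j)⟩

/-- Subalgebras of models of quasi-identities are models. -/
lemma subAlg_mem_ModQ {σ : Signature} {E : Set (QuasiId σ)} {A : SigAlg σ}
    (hA : A ∈ ModQ σ E) {C : Set A.carrier} (hC : IsSubuniverse A C) :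
    subAlg A C hC ∈ ModQ σ E := by
  intro q hq env hprem
  have hval : IsHom (subAlg A C hC) A (Subtype.val) := fun o xs => rfl
  apply Subtype.ext
  have key : ∀ t : SigTerm σ q.nvars,
      (Subtype.val : (subAlg A C hC).carrier → A.carrier) (evalT (subAlg A C hC) env t)
        = evalT A (fun i => (Subtype.val : (subAlg A C hC).carrier → A.carrier) (env i)) t :=
    fun t => evalT_hom hval env t
  rw [key, key]
  apply hA q hq
  intro r hr
  rw [← key, ← key, hprem r hr]

/-- let `V` be an almost structurally complete variety with free algebra
`F` of denumerable rank, and let `P` be a `V`-finitely presented unifiable algebra that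
does not embed into `F`.  Then `P` has no most general unifier; in particular `V` does
not have unitary unification. -/
theorem stmt15 (σ : Signature) (V : Set (SigAlg σ)) (hV : IsVarietyAlg σ V)
    (F : SigAlg σ) (x : ℕ → F.carrier) (hF : IsFreeAlg σ V F x)
    (hASC : ASC σ V F)
    (P : SigAlg σ) (hP : P ∈ V) (hPfp : IsFinitelyPresented V P)
    (hunif : ∃ u : P.carrier → F.carrier, IsUnifier P F u)
    (hnoemb : ¬ ∃ u : P.carrier → F.carrier, IsHom P F u ∧ Function.Injective u) :
    (¬ ∃ u : P.carrier → F.carrier, IsMGU P F u) ∧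
      ¬ HasUnitaryUnification V F := by
  obtain ⟨k, rels, p, hrels, huniv⟩ := hPfp
  obtain ⟨E, _, hVE⟩ := hV
  obtain ⟨w, hw⟩ := hunif
  have hFV : F ∈ V := hF.1
  -- P is generated by p
  set C : Set P.carrier := Set.range (fun t : SigTerm σ k => evalT P p t) with hCdef
  have hC : IsSubuniverse P C := range_evalT_subuniverse P p
  have hsubV : subAlg P C hC ∈ V := by
    rw [hVE]; exact subAlg_mem_ModQ (hVE ▸ hP) hC
  have hpC : ∀ j, p j ∈ C := fun j => ⟨SigTerm.var j, rfl⟩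
  have hgen : ∀ a : P.carrier, a ∈ C := by
    have hval : IsHom (subAlg P C hC) P (Subtype.val) := fun o xs => rfl
    have hrels' : ∀ r ∈ rels,
        evalT (subAlg P C hC) (fun j => ⟨p j, hpC j⟩) r.1
          = evalT (subAlg P C hC) (fun j => ⟨p j, hpC j⟩) r.2 := by
      intro r hr
      apply Subtype.ext
      have key := fun t => evalT_hom hval (fun j => (⟨p j, hpC j⟩ : C)) t
      rw [key, key]
      exact hrels r hr
    obtain ⟨h, ⟨hhom, hfix⟩, _⟩ := huniv (subAlg P C hC) hsubV (fun j => ⟨p j, hpC j⟩) hrels'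
    obtain ⟨_, _, huniq⟩ := huniv P hP p hrels
    have h1 : Subtype.val ∘ h = id := by
      have e1 := huniq (Subtype.val ∘ h)
        ⟨isHom_comp hhom hval, fun j => congrArg Subtype.val (hfix j)⟩
      have e2 := huniq id ⟨fun o xs => rfl, fun j => rfl⟩
      rw [e1, e2]
    intro a
    have : (Subtype.val : (subAlg P C hC).carrier → P.carrier) (h a) = a := congrFun h1 a
    rw [← this]; exact ((h a : C)).2
  -- unifiers separate points
  have hsep : ∀ a b : P.carrier, a ≠ b →
      ∃ v : P.carrier → F.carrier, IsHom P F v ∧ v a ≠ v b := by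
    intro a b hab
    obtain ⟨s, hs⟩ := hgen a
    obtain ⟨t, ht⟩ := hgen b
    by_cases hq : SatQ F ⟨k, rels, (s, t)⟩
    · exfalso
      have hact : IsActive F ⟨k, rels, (s, t)⟩ := by
        refine ⟨hq, fun j => w (p j), fun r hr => ?_⟩
        have key := fun u => evalT_hom hw p u
        show evalT F (fun j => w (p j)) r.1 = evalT F (fun j => w (p j)) r.2
        rw [← key, ← key, hrels r hr]
      have := hASC _ hact P hP p hrels
      exact hab (hs ▸ ht ▸ this)
    · simp only [SatQ, not_forall] at hq
      obtain ⟨env, hprem, hne⟩ := hq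
      obtain ⟨v, ⟨hvhom, hvfix⟩, _⟩ := huniv F hFV env hprem
      refine ⟨v, hvhom, ?_⟩
      have key := fun u => evalT_hom hvhom p u
      rw [← hs, ← ht, key, key]
      have : (fun i => v (p i)) = env := funext hvfix
      rw [this]
      exact hne
  have noMGU : ¬ ∃ u : P.carrier → F.carrier, IsMGU P F u := by
    rintro ⟨u, hu, hmgu⟩
    apply hnoemb
    refine ⟨u, hu, fun a b hab => ?_⟩
    by_contra hne
    obtain ⟨v, hvhom, hvne⟩ := hsep a b hne
    obtain ⟨sph, _, hfac⟩ := hmgu v hvhom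
    apply hvne
    rw [hfac]
    show sph (u a) = sph (u b)
    rw [hab]
  exact ⟨noMGU, fun h => noMGU (h P hP ⟨k, rels, p, hrels, huniv⟩ ⟨w, hw⟩)⟩
end

section
/- Consider the quasivariety K of monounary algebras (one unary operation f) defined by the quasi-identity (∀x,y)[f(x) = f(y) → x = y] (i.e., f is injective). Then for every A ∈ K, the product A × F(1), where F(1) = (ℕ, x ↦ x+1), is a disjoint union of subalgebras each isomorphic to F(1); in particular A × F(1) is a free monounary algebra. -/
open Function

private theorem stmt18_iterate_g {A : Type} (f : A → A) (k : ℕ) (q : A × ℕ) :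
    (fun p : A × ℕ => (f p.1, p.2 + 1))^[k] q = (f^[k] q.1, q.2 + k) := by
  induction k with
  | zero => simp
  | succ n ih =>
    rw [Function.iterate_succ_apply', ih, Function.iterate_succ_apply']
    simp [Nat.add_assoc]

/-- let `A` be a monounary algebra whose operation `f` is injective (so
`A` satisfies the quasi-identity `f(x) = f(y) → x = y`), and let `F(1) = (ℕ, ·+1)` be
the free monounary algebra on one generator.  Then `A × F(1)` (with operation
`g(a, n) = (f a, n + 1)`) is the disjoint union of the subalgebras generated by the
elements `(a, n)` with `a ∉ f(A)` or `n = 0`, each of which is isomorphic to `F(1)`;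
in particular `A × F(1)` is a free monounary algebra (over this set of generators). -/
theorem stmt18 (A : Type) (f : A → A) (hf : Function.Injective f) :
    let g : A × ℕ → A × ℕ := fun p => (f p.1, p.2 + 1)
    let Gen : Set (A × ℕ) := {p | p.1 ∉ Set.range f ∨ p.2 = 0}
    -- the orbits of the generators partition `A × F(1)` …
    (∀ p : A × ℕ, ∃! q : A × ℕ, q ∈ Gen ∧ ∃ k : ℕ, g^[k] q = p) ∧
    -- … each subalgebra generated by a generator is isomorphic to `F(1)` …
    (∀ q ∈ Gen, ∃ φ : ℕ → A × ℕ, Function.Injective φ ∧ φ 0 = q ∧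
      (∀ n, φ (n + 1) = g (φ n)) ∧ Set.range φ = {p | ∃ k : ℕ, g^[k] q = p}) ∧
    -- … and `A × F(1)` is free over `Gen`: the universal mapping property holds.
    (∀ (B : Type) (fB : B → B) (h0 : Gen → B),
      ∃! h : A × ℕ → B, (∀ p : A × ℕ, h (g p) = fB (h p)) ∧ ∀ q : Gen, h q = h0 q) := by
  classical
  intro g Gen
  have hg : ∀ (k : ℕ) (q : A × ℕ), g^[k] q = (f^[k] q.1, q.2 + k) := stmt18_iterate_g f
  have part1 : ∀ p : A × ℕ, ∃! q : A × ℕ, q ∈ Gen ∧ ∃ k : ℕ, g^[k] q = p := by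
    rintro ⟨a, n⟩
    set K := Nat.findGreatest (fun k => a ∈ Set.range (f^[k])) n with hKdef
    have hKle : K ≤ n := Nat.findGreatest_le _
    have hKmem : a ∈ Set.range (f^[K]) := by
      rw [hKdef]
      exact Nat.findGreatest_spec (P := fun k => a ∈ Set.range (f^[k])) (Nat.zero_le _)
        (show a ∈ Set.range (f^[0]) from ⟨a, rfl⟩)
    obtain ⟨b, hb⟩ := hKmem
    refine ⟨(b, n - K), ⟨?_, K, ?_⟩, ?_⟩
    · rcases eq_or_lt_of_le hKle with h | h
      · right; simp [h]
      · left
        rintro ⟨c, hc⟩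
        have hmem : a ∈ Set.range (f^[K + 1]) :=
          ⟨c, by rw [Function.iterate_succ_apply, hc, hb]⟩
        have := Nat.le_findGreatest (P := fun k => a ∈ Set.range (f^[k])) h hmem
        omega
    · rw [hg]
      simp [hb, Nat.sub_add_cancel hKle]
    · rintro ⟨b', m⟩ ⟨hgen, j, hj⟩
      rw [hg] at hj
      simp only [Prod.mk.injEq] at hj
      obtain ⟨hj1, hj2⟩ := hj
      have hjle : j ≤ n := by omega
      have hjK : j ≤ K := Nat.le_findGreatest (P := fun k => a ∈ Set.range (f^[k])) hjle ⟨b', hj1⟩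
      have hKj : K ≤ j := by
        by_contra h
        push_neg at h
        rcases hgen with hgen | hgen
        · have h1 : f^[j] (f^[K - j] b) = f^[j] b' := by
            rw [← Function.iterate_add_apply, hj1]
            rw [show j + (K - j) = K by omega, hb]
          have h2 := (hf.iterate j) h1
          have h4 : f (f^[K - j - 1] b) = f^[K - j] b := by
            conv_rhs => rw [show K - j = K - j - 1 + 1 by omega]
            exact (Function.iterate_succ_apply' f _ b).symm
          exact hgen ⟨f^[K - j - 1] b, by rw [h4, h2]⟩
        · have hm : m = 0 := hgen
          omega
      have hjK' : j = K := le_antisymm hjK hKj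
      subst hjK'
      have hbb : b' = b := hf.iterate K (by rw [hj1, hb])
      subst hbb
      have hm : m = n - K := by omega
      rw [hm]
  refine ⟨part1, ?_, ?_⟩
  · intro q hq
    refine ⟨fun n => g^[n] q, ?_, rfl, fun n => Function.iterate_succ_apply' g n q, ?_⟩
    · intro n m hnm
      have h2 := congrArg Prod.snd hnm
      simp only [hg] at h2
      omega
    · ext p
      simp only [Set.mem_range, Set.mem_setOf_eq]
  · intro B fB h0
    choose r hr hk using fun p => (part1 p).exists
    choose k hkk using hk
    have huniq : ∀ p q, q ∈ Gen → (∃ j, g^[j] q = p) → r p = q := by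
      intro p q hq hj
      exact ((part1 p).unique ⟨hr p, k p, hkk p⟩ ⟨hq, hj⟩)
    have hgen_root : ∀ q : A × ℕ, q ∈ Gen → r q = q ∧ k q = 0 := by
      intro q hq
      have h1 : r q = q := huniq q q hq ⟨0, rfl⟩
      have h2 := hkk q
      rw [h1, hg] at h2
      have := congrArg Prod.snd h2
      simp at this
      exact ⟨h1, this⟩
    have hstep : ∀ p : A × ℕ, r (g p) = r p ∧ k (g p) = k p + 1 := by
      intro p
      have h1 : r (g p) = r p := by
        refine huniq (g p) (r p) (hr p) ⟨k p + 1, ?_⟩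
        rw [Function.iterate_succ_apply', hkk p]
      have h2 := hkk (g p)
      rw [h1, hg] at h2
      have h3 := hkk p
      rw [hg] at h3
      have e2 := congrArg Prod.snd h2
      have e3 := congrArg Prod.snd h3
      simp only at e2 e3
      constructor
      · exact h1
      · have : (g p).2 = p.2 + 1 := rfl
        omega
    refine ⟨fun p => fB^[k p] (h0 ⟨r p, hr p⟩), ⟨?_, ?_⟩, ?_⟩
    · intro p
      have hs := hstep p
      have e1 : (⟨r (g p), hr (g p)⟩ : Gen) = ⟨r p, hr p⟩ := Subtype.ext hs.1
      show fB^[k (g p)] (h0 ⟨r (g p), hr (g p)⟩) = fB (fB^[k p] (h0 ⟨r p, hr p⟩))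
      rw [hs.2, Function.iterate_succ_apply', e1]
    · intro q
      have h := hgen_root q q.2
      have e1 : (⟨r ↑q, hr ↑q⟩ : Gen) = q := Subtype.ext h.1
      show fB^[k ↑q] (h0 ⟨r ↑q, hr ↑q⟩) = h0 q
      rw [h.2, e1]
      rfl
    · rintro h' ⟨hcomm, hgen'⟩
      funext p
      have key : ∀ (j : ℕ) (q : A × ℕ), h' (g^[j] q) = fB^[j] (h' q) := by
        intro j
        induction j with
        | zero => intro q; rfl
        | succ m ih =>
          intro q
          rw [Function.iterate_succ_apply', hcomm, ih]
          exact (Function.iterate_succ_apply' fB m (h' q)).symm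
      calc h' p = h' (g^[k p] (r p)) := by rw [hkk p]
        _ = fB^[k p] (h' (r p)) := key _ _
        _ = fB^[k p] (h0 ⟨r p, hr p⟩) := by rw [hgen' ⟨r p, hr p⟩]
end
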